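/- arXiv:2509.01634 — 4 statements merged into one kernel-verified Lean document; each statement's English description precedes it below -/
import Mathlib

section
/- Let m ≥ 4 be composite and p the smallest prime dividing m. Let e₀ = m < e₁ < e₂ be integers such that b₁ = gcd(m, e₁) satisfies 1 < b₁ < m and gcd(b₁, e₂) = 1. Then e₁ ≥ m + p. Moreover, the quantity (m − b₁)(e₁ − 1) + (b₁ − 1)(e₂ − 1) is minimized, over all such triples, by the triple (m, m+p, m+p+1), where its value is (m − p)(m + p − 1) + (p − 1)(m + p). -/
/-!
Since `b₁ = gcd(m, e₁)` divides both `m` and `e₁`, it divides `e₁ - m > 0`, so `e₁ ≥ m + b₁`,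
and `b₁ ≥ p` because `b₁ > 1` divides `m`. The Milnor number is increasing in `e₁` and `e₂`,
so it is at least its value at `(m, m + b₁, m + b₁ + 1)`, which is `m (m + b₁ - 2)` and hence
increasing in `b₁`.
-/

namespace Nat

theorem gcd_le_sub_of_lt {m e : ℕ} (h : m < e) : gcd m e ≤ e - m :=
  le_of_dvd (Nat.sub_pos_of_lt h) (Nat.dvd_sub (gcd_dvd_right m e) (gcd_dvd_left m e))

theorem minFac_le_gcd {m e : ℕ} (h : 1 < gcd m e) : m.minFac ≤ gcd m e :=
  minFac_le_of_dvd h (gcd_dvd_left m e)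

end Nat

/-- `(b₀ - b₁)(e₁ - 1) + (b₁ - b₂)(e₂ - 1)` with `b₀ = m` and `b₂ = 1`. -/
def milnorNumber (m b₁ e₁ e₂ : ℕ) : ℕ :=
  (m - b₁) * (e₁ - 1) + (b₁ - 1) * (e₂ - 1)

theorem milnorNumber_mono {m b₁ e₁ e₂ e₁' e₂' : ℕ} (h₁ : e₁ ≤ e₁') (h₂ : e₂ ≤ e₂') :
    milnorNumber m b₁ e₁ e₂ ≤ milnorNumber m b₁ e₁' e₂' := by
  unfold milnorNumber
  gcongr

theorem milnorNumber_add_self {m b : ℕ} (hb : 1 ≤ b) (hbm : b ≤ m) :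
    milnorNumber m b (m + b) (m + b + 1) = m * (m + b - 2) := by
  rw [milnorNumber, Nat.add_sub_cancel]
  zify [hbm, hb, show 1 ≤ m + b by omega, show 2 ≤ m + b by omega]
  ring

theorem mu_three_exponents_minimal_general (m e₁ e₂ : ℕ)
    (h1 : m < e₁) (h2 : e₁ < e₂)
    (hb₁ : 1 < Nat.gcd m e₁) (hb₁' : Nat.gcd m e₁ < m) :
    m + m.minFac ≤ e₁ ∧
      (m - m.minFac) * (m + m.minFac - 1) + (m.minFac - 1) * (m + m.minFac) ≤
        (m - Nat.gcd m e₁) * (e₁ - 1) + (Nat.gcd m e₁ - 1) * (e₂ - 1) := by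
  set b := Nat.gcd m e₁
  set p := m.minFac
  have hbe : m + b ≤ e₁ := by have := Nat.gcd_le_sub_of_lt h1; omega
  have hpb : p ≤ b := Nat.minFac_le_gcd hb₁
  have hp : 1 ≤ p := Nat.minFac_pos m
  refine ⟨by omega, ?_⟩
  calc milnorNumber m p (m + p) (m + p + 1)
      = m * (m + p - 2) := milnorNumber_add_self hp (by omega)
    _ ≤ m * (m + b - 2) := by gcongr
    _ = milnorNumber m b (m + b) (m + b + 1) := (milnorNumber_add_self hb₁.le hb₁'.le).symm
    _ ≤ milnorNumber m b e₁ e₂ := milnorNumber_mono hbe (by omega)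

/-- Let `m ≥ 4` be composite with smallest prime divisor `p = m.minFac`, and let
`m < e₁ < e₂` with `b₁ = gcd m e₁` satisfying `1 < b₁ < m` and `gcd b₁ e₂ = 1`.
Then `e₁ ≥ m + p`, and the Milnor number
`(m - b₁)(e₁ - 1) + (b₁ - 1)(e₂ - 1)` is at least its value at the triple
`(m, m+p, m+p+1)`, namely `(m - p)(m + p - 1) + (p - 1)(m + p)`. -/
theorem mu_three_exponents_minimal (m e₁ e₂ : ℕ) (hm : 4 ≤ m) (hcomp : ¬ m.Prime)
    (h1 : m < e₁) (h2 : e₁ < e₂)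
    (hb₁ : 1 < Nat.gcd m e₁) (hb₁' : Nat.gcd m e₁ < m)
    (hb₂ : Nat.gcd (Nat.gcd m e₁) e₂ = 1) :
    m + m.minFac ≤ e₁ ∧
      (m - m.minFac) * (m + m.minFac - 1) + (m.minFac - 1) * (m + m.minFac) ≤
        (m - Nat.gcd m e₁) * (e₁ - 1) + (Nat.gcd m e₁ - 1) * (e₂ - 1) :=
  mu_three_exponents_minimal_general m e₁ e₂ h1 h2 hb₁ hb₁'
end

section
/- Let m ≥ 4 be composite with prime factorization m = p₁ p₂ ⋯ p_r, p₁ ≤ p₂ ≤ ⋯ ≤ p_r, and let 3 ≤ k ≤ r+1. Define d_i = p₁ p₂ ⋯ p_{(k-1)-i} for i = 1, …, k−2, and the exponents E₀ = m, E_j = m + d₁ + d₂ + ⋯ + d_j for j = 1, …, k−2, E_{k-1} = E_{k-2} + 1. Then the gcd sequence B₀ = m, B_j = gcd(B_{j-1}, E_j) satisfies B_j = d_j for j = 1, …, k−2 and B_{k-1} = 1; in particular it is strictly decreasing and these exponents are valid characteristic exponents of an irreducible plane curve of multiplicity m with exactly k characteristic exponents. -/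
/-!
Write `P n` for the product of the `n` smallest prime factors of `m`, so that `d j = P (k-1-j)`
for `j ≥ 1`, `d (k-1) = 1`, and `d (j+1) ∣ d j` throughout. Each exponent is the previous one plus
the next divisor, `E (j+1) = E j + d (j+1)`, so inductively `d j ∣ E j`, and then
`gcd (d j) (E j + d (j+1)) = gcd (d j) (d (j+1)) = d (j+1)`. The last step, adding `d (k-1) = 1`,
is the same computation and makes the gcd `1`; strict decrease holds because every prime is `≥ 2`.
-/

theorem Nat.gcd_add_eq_of_dvd {a b c : ℕ} (hca : c ∣ a) (hab : a ∣ b) : Nat.gcd a (b + c) = c := by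
  obtain ⟨t, rfl⟩ := hab
  rw [add_comm, Nat.gcd_add_mul_left_right, Nat.gcd_eq_right hca]

section GcdChain

variable {n : ℕ} {D E B : ℕ → ℕ}

theorem dvd_of_add_chain (hD : ∀ j < n, D (j + 1) ∣ D j) (hE0 : D 0 ∣ E 0)
    (hE : ∀ j < n, E (j + 1) = E j + D (j + 1)) : ∀ j ≤ n, D j ∣ E j := by
  intro j hj
  induction j with
  | zero => exact hE0
  | succ j ih =>
    rw [hE j hj]
    exact dvd_add ((hD j hj).trans (ih (by omega))) dvd_rfl

theorem gcd_chain_eq (hD : ∀ j < n, D (j + 1) ∣ D j) (hE0 : D 0 ∣ E 0)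
    (hE : ∀ j < n, E (j + 1) = E j + D (j + 1)) (hB0 : B 0 = D 0)
    (hB : ∀ j, B (j + 1) = Nat.gcd (B j) (E (j + 1))) : ∀ j ≤ n, B j = D j := by
  intro j hj
  induction j with
  | zero => exact hB0
  | succ j ih =>
    rw [hB, ih (by omega), hE j hj]
    exact Nat.gcd_add_eq_of_dvd (hD j hj) (dvd_of_add_chain hD hE0 hE j (by omega))

end GcdChain

theorem List.prod_take_dvd_prod_take {M : Type*} [CommMonoid M] (L : List M) {a b : ℕ}
    (hab : a ≤ b) : (L.take a).prod ∣ (L.take b).prod :=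
  (List.take_prefix_take_left hab).sublist.prod_dvd_prod

theorem List.prod_take_lt_prod_take {L : List ℕ} (hL : ∀ x ∈ L, 1 < x) {a b : ℕ} (hab : a < b)
    (hb : b ≤ L.length) : (L.take a).prod < (L.take b).prod := by
  have hpos : ∀ c, 0 < (L.take c).prod := fun c =>
    List.prod_pos fun x hx => (hL x (List.mem_of_mem_take hx)).trans' Nat.zero_lt_one
  have ha : a < L.length := by omega
  calc (L.take a).prod < (L.take a).prod * L[a] :=
        lt_mul_of_one_lt_right (hpos a) (hL _ (List.getElem_mem ha))
    _ = (L.take (a + 1)).prod := (List.prod_take_succ L a ha).symm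
    _ ≤ (L.take b).prod := Nat.le_of_dvd (hpos b) (L.prod_take_dvd_prod_take hab)

theorem normal_form_gcd_sequence_general (m k : ℕ)
    (hk3 : 3 ≤ k) (hkr : k ≤ m.primeFactorsList.length + 1)
    (d E B : ℕ → ℕ)
    (hd0 : d 0 = m)
    (hd : ∀ i, 1 ≤ i → d i = ((m.primeFactorsList).take (k - 1 - i)).prod)
    (hE : ∀ j, j ≤ k - 2 → E j = m + ∑ i ∈ Finset.Icc 1 j, d i)
    (hElast : E (k - 1) = E (k - 2) + 1)
    (hB0 : B 0 = m)
    (hBrec : ∀ j, B (j + 1) = Nat.gcd (B j) (E (j + 1))) :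
    (∀ j, 1 ≤ j → j ≤ k - 2 → B j = d j) ∧
      B (k - 1) = 1 ∧
      (∀ j, j < k - 1 → B (j + 1) < B j) := by
  set L := m.primeFactorsList
  have hm : m ≠ 0 := by rintro rfl; simp [L] at hkr; omega
  have hLm : (L.take L.length).prod = m := by rw [List.take_length, Nat.prod_primeFactorsList hm]
  have hL : ∀ x ∈ L, 1 < x := fun x hx => (Nat.prime_of_mem_primeFactorsList hx).one_lt
  have hdlast : d (k - 1) = 1 := by rw [hd _ (by omega), Nat.sub_self, List.take_zero, List.prod_nil]
  have hdvd : ∀ j < k - 1, d (j + 1) ∣ d j := by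
    rintro (_ | j) hj
    · rw [hd0, hd _ le_rfl, ← hLm]; exact L.prod_take_dvd_prod_take (by omega)
    · rw [hd _ (by omega), hd _ (by omega)]; exact L.prod_take_dvd_prod_take (by omega)
  have hlt : ∀ j < k - 1, d (j + 1) < d j := by
    rintro (_ | j) hj
    · rw [hd0, hd _ le_rfl, ← hLm]; exact List.prod_take_lt_prod_take hL (by omega) le_rfl
    · rw [hd _ (by omega), hd _ (by omega)]; exact List.prod_take_lt_prod_take hL (by omega) (by omega)
  have hstep : ∀ j < k - 1, E (j + 1) = E j + d (j + 1) := by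
    intro j hj
    rcases Nat.lt_or_ge (j + 1) (k - 1) with hj' | hj'
    · rw [hE _ (by omega), hE _ (by omega), Finset.sum_Icc_succ_top (by omega), add_assoc]
    · obtain rfl : j = k - 2 := by omega
      rw [show k - 2 + 1 = k - 1 by omega, hElast, hdlast]
  have hBd := gcd_chain_eq hdvd (by rw [hE 0 (Nat.zero_le _), hd0]; simp) hstep (hB0.trans hd0.symm)
    hBrec
  refine ⟨fun j _ hj => hBd j (by omega), (hBd _ le_rfl).trans hdlast, fun j hj => ?_⟩
  rw [hBd _ hj, hBd _ hj.le]
  exact hlt j hj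

/-- Let `m ≥ 4` be composite with sorted prime factorization `p₁ ≤ ⋯ ≤ p_r`
(given by `m.primeFactorsList`), and `3 ≤ k ≤ r + 1`. Set `d 0 = m`,
`d i = p₁ ⋯ p_{(k-1)-i}` for `i ≥ 1` (so `d (k-1) = 1`), and exponents
`E 0 = m`, `E j = m + d 1 + ⋯ + d j` for `1 ≤ j ≤ k-2`, `E (k-1) = E (k-2) + 1`.
Then any gcd sequence `B` with `B 0 = m`, `B (j+1) = gcd (B j) (E (j+1))`
satisfies `B j = d j` for `1 ≤ j ≤ k-2`, `B (k-1) = 1`, and is strictly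
decreasing up to `k-1`: these are valid characteristic exponents. -/
theorem normal_form_gcd_sequence (m k : ℕ) (hm : 4 ≤ m) (hcomp : ¬ m.Prime)
    (hk3 : 3 ≤ k) (hkr : k ≤ m.primeFactorsList.length + 1)
    (d E B : ℕ → ℕ)
    (hd0 : d 0 = m)
    (hd : ∀ i, 1 ≤ i → d i = ((m.primeFactorsList).take (k - 1 - i)).prod)
    (hE : ∀ j, j ≤ k - 2 → E j = m + ∑ i ∈ Finset.Icc 1 j, d i)
    (hElast : E (k - 1) = E (k - 2) + 1)
    (hB0 : B 0 = m)
    (hBrec : ∀ j, B (j + 1) = Nat.gcd (B j) (E (j + 1))) :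
    (∀ j, 1 ≤ j → j ≤ k - 2 → B j = d j) ∧
      B (k - 1) = 1 ∧
      (∀ j, j < k - 1 → B (j + 1) < B j) :=
  normal_form_gcd_sequence_general m k hk3 hkr d E B hd0 hd hE hElast hB0 hBrec
end

section
/- Let m ≥ 4 be composite and let μ_min(m, k) denote the minimal Milnor number among irreducible plane curve germs of multiplicity m with exactly k characteristic exponents, for 2 ≤ k ≤ σ(m)+1, given by μ_min(m,2) = m(m−1), μ_min(m,3) = m(m−2+d₁), and μ_min(m,k) = m(m−2+d₁) + Σ_{j=1}^{k-3} d_j(d_{j+1}−1) for k ≥ 4, where d_j = p₁⋯p_{(k-1)-j} for the sorted prime factorization m = p₁ ≤ ⋯ ≤ p_r. Then μ_min(m, k) < μ_min(m, k+1) for all admissible k. -/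
/-!
Since `d (k + 1) (j + 1) = d k j`, the sum in `μ_min(m, k + 1)` is the sum in `μ_min(m, k)`
plus its new `j = 1` term, so it does not decrease. The leading term strictly increases, because
`d k 1 = p₁ ⋯ p_{k-2}` gains the factor `p_{k-1} ≥ 2`; for `k = 2` the same holds with
`d 2 1 = 1`.
-/

open Finset

theorem Finset.sum_Icc_one_succ {M : Type*} [AddCommMonoid M] (f : ℕ → M) (n : ℕ) :
    ∑ j ∈ Icc 1 (n + 1), f j = f 1 + ∑ j ∈ Icc 1 n, f (j + 1) := by
  induction n with
  | zero => simp
  | succ n ih => rw [sum_Icc_succ_top (by omega), ih, sum_Icc_succ_top (by omega), add_assoc]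

theorem List.prod_take_lt_prod_take_succ {L : List ℕ} (hL : ∀ p ∈ L, 2 ≤ p) {n : ℕ}
    (hn : n < L.length) : (L.take n).prod < (L.take (n + 1)).prod := by
  have hpos : 0 < (L.take n).prod := List.prod_pos fun p hp => by
    have := hL p (List.mem_of_mem_take hp); omega
  rw [L.prod_take_succ n hn]
  exact lt_mul_of_one_lt_right hpos (hL _ (L.getElem_mem hn))

theorem mu_min_strict_mono_general (m : ℕ) (hm : 4 ≤ m)
    (d : ℕ → ℕ → ℕ)
    (hd : ∀ k j, d k j = ((m.primeFactorsList).take (k - 1 - j)).prod)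
    (μmin : ℕ → ℕ)
    (h2 : μmin 2 = m * (m - 1))
    (hk : ∀ k, 3 ≤ k →
      μmin k = m * (m - 2 + d k 1) +
        ∑ j ∈ Finset.Icc 1 (k - 3), d k j * (d k (j + 1) - 1)) :
    ∀ k, 2 ≤ k → k ≤ m.primeFactorsList.length → μmin k < μmin (k + 1) := by
  intro k hk2 hkL
  have hprime : ∀ p ∈ m.primeFactorsList, 2 ≤ p := fun p hp =>
    (Nat.prime_of_mem_primeFactorsList hp).two_le
  have hd_lt : d k 1 < d (k + 1) 1 := by
    rw [hd, hd, show k + 1 - 1 - 1 = k - 1 - 1 + 1 by omega]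
    exact List.prod_take_lt_prod_take_succ hprime (by omega)
  have hmul : m * (m - 2 + d k 1) < m * (m - 2 + d (k + 1) 1) :=
    Nat.mul_lt_mul_of_pos_left (by omega) (by omega)
  rcases hk2.eq_or_lt with rfl | hk3
  · have hd21 : d 2 1 = 1 := by simp [hd]
    rw [h2, hk 3 le_rfl, Icc_eq_empty_of_lt (by omega), sum_empty, add_zero]
    rwa [hd21, show m - 2 + 1 = m - 1 by omega] at hmul
  · have hshift : ∀ j, d (k + 1) (j + 1) = d k j := fun j => by
      rw [hd, hd, show k + 1 - 1 - (j + 1) = k - 1 - j by omega]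
    rw [hk k hk3, hk (k + 1) (by omega), show k + 1 - 3 = k - 3 + 1 by omega,
      sum_Icc_one_succ]
    have hsum : ∑ j ∈ Icc 1 (k - 3), d (k + 1) (j + 1) * (d (k + 1) (j + 1 + 1) - 1) =
        ∑ j ∈ Icc 1 (k - 3), d k j * (d k (j + 1) - 1) :=
      sum_congr rfl fun j _ => by rw [hshift, hshift]
    omega

/-- Strict monotonicity in `k` of the minimal Milnor number `μ_min(m, k)` among
irreducible plane curve germs of multiplicity `m` (composite, `m ≥ 4`) with
exactly `k` characteristic exponents, for `2 ≤ k ≤ σ(m)`, where `σ(m)` is the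
number of prime factors of `m` with multiplicity. Here, with
`d k j = p₁ ⋯ p_{(k-1)-j}` from the sorted prime factorization,
`μ_min(m,2) = m(m-1)` and
`μ_min(m,k) = m(m - 2 + d k 1) + ∑_{j=1}^{k-3} d k j * (d k (j+1) - 1)`
for `k ≥ 3`. -/
theorem mu_min_strict_mono (m : ℕ) (hm : 4 ≤ m) (hcomp : ¬ m.Prime)
    (d : ℕ → ℕ → ℕ)
    (hd : ∀ k j, d k j = ((m.primeFactorsList).take (k - 1 - j)).prod)
    (μmin : ℕ → ℕ)
    (h2 : μmin 2 = m * (m - 1))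
    (hk : ∀ k, 3 ≤ k →
      μmin k = m * (m - 2 + d k 1) +
        ∑ j ∈ Finset.Icc 1 (k - 3), d k j * (d k (j + 1) - 1)) :
    ∀ k, 2 ≤ k → k ≤ m.primeFactorsList.length → μmin k < μmin (k + 1) :=
  mu_min_strict_mono_general m hm d hd μmin h2 hk
end

section
/- Let m ≥ 3 and suppose an irreducible plane curve germ has three characteristic exponents e₀ = m, e₁, e₂ with gcd(m, e₁) = 2 (so m and e₁ are even) and e₂ odd with gcd(2, e₂) = 1. If the Milnor number (m − 2)(e₁ − 1) + (2 − 1)(e₂ − 1) is minimal among all such data (i.e., equals the μ_{m,3}-minimal value), then e₁ = m + 2 and e₂ = m + 3. -/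
/-! Since `gcd m e₁ = 2`, both `m` and `e₁` are even, so `e₁ ≥ m + 2` and `e₂ - 1 ≥ e₁ ≥ m + 2`.
Each summand of the Milnor number is then at least its value at `(e₁, e₂) = (m + 2, m + 3)`,
so equality of the sums forces `e₂ = m + 3`, which squeezes `e₁` between `m + 2` and `e₂`. -/

theorem Nat.add_le_of_dvd_of_lt {d a b : ℕ} (ha : d ∣ a) (hb : d ∣ b) (h : a < b) :
    a + d ≤ b := by
  obtain ⟨k, rfl⟩ := ha
  obtain ⟨l, rfl⟩ := hb
  have hkl : k + 1 ≤ l := Nat.lt_of_mul_lt_mul_left h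
  calc d * k + d = d * (k + 1) := by ring
    _ ≤ d * l := Nat.mul_le_mul_left d hkl

theorem minimal_three_exponents_even_general (m e₁ e₂ : ℕ)
    (h1 : m < e₁) (h2 : e₁ < e₂)
    (hgcd : Nat.gcd m e₁ = 2)
    (hmin : (m - 2) * (e₁ - 1) + (e₂ - 1) = (m - 2) * (m + 1) + (m + 2)) :
    e₁ = m + 2 ∧ e₂ = m + 3 := by
  have he₁ : m + 2 ≤ e₁ :=
    Nat.add_le_of_dvd_of_lt (hgcd ▸ Nat.gcd_dvd_left m e₁) (hgcd ▸ Nat.gcd_dvd_right m e₁) h1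
  have hμ : (m - 2) * (m + 1) ≤ (m - 2) * (e₁ - 1) := Nat.mul_le_mul_left _ (by omega)
  omega

/-- Let `m ≥ 4` be even, and suppose an irreducible plane curve germ has three
characteristic exponents `m < e₁ < e₂` with `gcd m e₁ = 2` (so `e₁` even) and
`e₂` odd. If the Milnor number `(m − 2)(e₁ − 1) + (e₂ − 1)` attains the
`μ_{m,3}`-minimal value `(m − 2)(m + 1) + (m + 2)` (its value at
`(e₁, e₂) = (m+2, m+3)`), then `e₁ = m + 2` and `e₂ = m + 3`. -/
theorem minimal_three_exponents_even (m e₁ e₂ : ℕ) (hm : 4 ≤ m) (hme : Even m)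
    (h1 : m < e₁) (h2 : e₁ < e₂)
    (hgcd : Nat.gcd m e₁ = 2) (he₂ : Odd e₂)
    (hmin : (m - 2) * (e₁ - 1) + (e₂ - 1) = (m - 2) * (m + 1) + (m + 2)) :
    e₁ = m + 2 ∧ e₂ = m + 3 :=
  minimal_three_exponents_even_general m e₁ e₂ h1 h2 hgcd hmin
end
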